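/- Stationarity of the semiclassical entanglement excitation on the candy graph: for every s ∈ ℕ and every α ∈ ℝ, the function g(β) = P_s(cos((α+β)/2)) · P_s(cos((α−β)/2)) of the relative angle β has vanishing derivative both at β = 0 (the balanced configuration θ₁ = θ₂) and at β = π (the maximally unbalanced configuration): deriv g 0 = 0 and deriv g π = 0. -/
import Mathlib

/-- The `s`-th Legendre polynomial as a real function, via Rodrigues' formula:
`P_s(x) = (1/(2^s s!)) (d/dx)^s (x² - 1)^s`. -/
noncomputable def legendreP (s : ℕ) (x : ℝ) : ℝ :=
  (1 / (2 ^ s * (Nat.factorial s : ℝ))) *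
    iteratedDeriv s (fun y : ℝ => (y ^ 2 - 1) ^ s) x

lemma legendreP_neg (s : ℕ) (x : ℝ) : legendreP s (-x) = (-1 : ℝ) ^ s * legendreP s x := by
  unfold legendreP
  have h : (fun y : ℝ => (y ^ 2 - 1) ^ s) = fun y : ℝ => ((-y) ^ 2 - 1) ^ s := by
    funext y; ring_nf
  have := iteratedDeriv_comp_neg s (fun y : ℝ => (y ^ 2 - 1) ^ s) (-x)
  rw [← h, neg_neg] at this
  rw [this]
  simp [smul_eq_mul]
  ring

lemma deriv_zero_of_even (h : ℝ → ℝ) (hh : ∀ t, h (-t) = h t) : deriv h 0 = 0 := by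
  have h1 : deriv h 0 = -deriv h 0 := by
    conv_lhs => rw [show h = fun t => h (-t) from funext fun t => (hh t).symm]
    rw [deriv_comp_neg]
    simp
  linarith

lemma deriv_zero_of_symm (g : ℝ → ℝ) (c : ℝ) (hs : ∀ t, g (c - t) = g (c + t)) :
    deriv g c = 0 := by
  have key : deriv (fun t => g (c + t)) 0 = 0 := by
    apply deriv_zero_of_even
    intro t
    simpa [sub_eq_add_neg] using hs t
  rwa [deriv_comp_const_add, add_zero] at key

/-- Stationarity of the semiclassical entanglement excitation on the candy graph:
for fixed total angle `α`, the function
`g(β) = P_s(cos((α+β)/2)) · P_s(cos((α-β)/2))` of the relative angle `β` has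
vanishing derivative at `β = 0` (balanced configuration `θ₁ = θ₂`) and at `β = π`
(maximally unbalanced configuration). -/
theorem legendre_candy_graph_stationary
    (s : ℕ) (α : ℝ)
    (g : ℝ → ℝ)
    (hg : ∀ β : ℝ, g β
      = legendreP s (Real.cos ((α + β) / 2)) * legendreP s (Real.cos ((α - β) / 2))) :
    deriv g 0 = 0 ∧ deriv g Real.pi = 0 := by
  constructor
  · apply deriv_zero_of_symm
    intro t
    rw [hg, hg]
    have h1 : α - (0 - t) = α + t := by ring
    have h2 : α + (0 - t) = α - t := by ring
    have h3 : α + (0 + t) = α + t := by ring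
    have h4 : α - (0 + t) = α - t := by ring
    rw [h1, h2, h3, h4, mul_comm]
  · apply deriv_zero_of_symm
    intro t
    rw [hg, hg]
    have h1 : (α + (Real.pi - t)) / 2 = (α - Real.pi - t) / 2 + Real.pi := by ring
    have h2 : (α - (Real.pi - t)) / 2 = (α + Real.pi + t) / 2 - Real.pi := by ring
    have h3 : (α + (Real.pi + t)) / 2 = (α + Real.pi + t) / 2 := by ring
    have h4 : (α - (Real.pi + t)) / 2 = (α - Real.pi - t) / 2 := by ring
    rw [h1, h2, h3, h4, Real.cos_add_pi, Real.cos_sub_pi,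
      show (-Real.cos ((α - Real.pi - t) / 2)) = -(Real.cos ((α - Real.pi - t) / 2)) from rfl]
    rw [show -Real.cos ((α + Real.pi + t) / 2) = -(Real.cos ((α + Real.pi + t) / 2)) from rfl]
    rw [legendreP_neg, legendreP_neg]
    ring_nf
    rw [show s*2 = 2*s by ring, pow_mul]
    norm_num
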